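/- Let Γ be a connected finite directed graph without self-loops with vertex set {1,…,N}, N ≥ 2, and let Γ'₁ ⊆ Γ₁ be a nonempty edge subset. Fix positive reals ξ_e for e ∈ Γ'₁ and s_e for e ∈ Γ₁ ∖ Γ'₁, and for ρ > 0 define weights t_e(ρ) = ρ ξ_e if e ∈ Γ'₁ and t_e(ρ) = s_e otherwise. Then for every edge e ∈ Γ₁ and every 1 ≤ j ≤ N−1, the function ρ ↦ (1/t_e(ρ)) Σ_{i=1}^{N−1} ρ^e_i (M_Γ(t(ρ))^{−1})_{ij}, defined on (0, ∞), extends to a function on [0, ∞) that is C^∞ (smooth) on [0, ∞). -/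

import Mathlib

open Finset

/-- Reachability between vertices generated by (the endpoints of) the edges in `S`:
the equivalence relation generated by the pairs `(h e, t e)`, `e ∈ S`. -/
def Reach {V E : Type*} (hm tm : E → V) (S : Set E) : V → V → Prop :=
  Relation.EqvGen fun a b => ∃ e ∈ S, hm e = a ∧ tm e = b

/-- Incidence matrix entry: `1` if `i` is the head of `e`, `-1` if it is the tail,
`0` otherwise. -/
def inc {V E : Type*} [DecidableEq V] (hm tm : E → V) (e : E) (i : V) : ℝ :=
  if hm e = i then 1 else if tm e = i then -1 else 0

/-- Reduced weighted Laplacian `M_Γ(t)_{ij} = ∑_e ρ^e_i ρ^e_j / t_e`,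
indexed by the first `n` of the `n + 1` vertices. -/
noncomputable def lap {n : ℕ} {E : Type*} [Fintype E] (hm tm : E → Fin (n + 1))
    (w : E → ℝ) : Matrix (Fin n) (Fin n) ℝ :=
  Matrix.of fun i j => ∑ e, inc hm tm e i.castSucc * inc hm tm e j.castSucc / w e

/-- `T` is a spanning tree: it has `N - 1` edges and connects all vertices. -/
def IsSpanningTree {n : ℕ} {E : Type*} [Fintype E] (hm tm : E → Fin (n + 1))
    (T : Finset E) : Prop :=
  T.card = n ∧ ∀ a b : Fin (n + 1), Reach hm tm (↑T) a b

/-!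
Multiplying the Laplacian by `ρ` makes it polynomial in `ρ`, so by Cramer's rule the function
`f(ρ)` is a rational function `P(ρ) / Q(ρ)` whose denominator does not vanish on `(0, ∞)`; the
only obstruction to a smooth extension is a pole at `0`. Cauchy–Schwarz for the form of
`M(t)⁻¹`, the bound `ρ^e · M(t)⁻¹ ρ^e ≤ t_e` (the effective resistance of an edge is at most its
resistance) and the monotonicity of `M(t)⁻¹` in `t` (Rayleigh) give `f(ρ)² ≤ C / t_e(ρ)`, so
`ρ f(ρ)²` stays bounded as `ρ → 0⁺`, which is incompatible with a pole.
-/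

open Matrix Polynomial Filter Topology

namespace Polynomial

theorem contDiff_eval (p : ℝ[X]) (k : WithTop ℕ∞) : ContDiff ℝ k fun x ↦ p.eval x :=
  p.contDiff_aeval k

theorem exists_eval_eq_pow_rootMultiplicity_zero_mul {R : Type*} [CommRing R] {p : R[X]}
    (hp : p ≠ 0) :
    ∃ q : R[X], q.eval 0 ≠ 0 ∧ ∀ x, p.eval x = x ^ p.rootMultiplicity 0 * q.eval x := by
  obtain ⟨q, hpq, hq⟩ := p.exists_eq_pow_rootMultiplicity_mul_and_not_dvd hp 0
  refine ⟨q, by rwa [dvd_iff_isRoot] at hq, fun x ↦ ?_⟩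
  conv_lhs => rw [hpq]
  simp

/-- A pole of order `k ≥ 1` at `0` would make `ρ (P/Q)²` grow like `ρ^(1-2k)`. -/
theorem rootMultiplicity_zero_le_of_eventually_mul_sq_div_le {P Q : ℝ[X]} (hP : P ≠ 0)
    (hQ : Q ≠ 0) {K : ℝ} (hbound : ∀ᶠ ρ in 𝓝[>] 0, ρ * (P.eval ρ / Q.eval ρ) ^ 2 ≤ K) :
    Q.rootMultiplicity 0 ≤ P.rootMultiplicity 0 := by
  obtain ⟨P₁, hP₁0, hP₁⟩ := exists_eval_eq_pow_rootMultiplicity_zero_mul hP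
  obtain ⟨Q₁, hQ₁0, hQ₁⟩ := exists_eval_eq_pow_rootMultiplicity_zero_mul hQ
  by_contra! hlt
  obtain ⟨d, hd⟩ := Nat.exists_eq_add_of_lt hlt
  set R : ℝ[X] := P₁ ^ 2 - C K * X ^ (2 * d + 1) * Q₁ ^ 2
  have hR0 : 0 < R.eval 0 := by
    simp only [R, eval_sub, eval_mul, eval_pow, eval_C, eval_X, zero_pow (Nat.succ_ne_zero _),
      mul_zero, zero_mul, sub_zero]
    positivity
  have hR : ∀ᶠ ρ in 𝓝[>] 0, R.eval ρ ≤ 0 := by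
    have hQ₁ne : ∀ᶠ ρ in 𝓝[>] (0 : ℝ), Q₁.eval ρ ≠ 0 :=
      nhdsWithin_le_nhds (Q₁.continuous.continuousAt.eventually_ne hQ₁0)
    filter_upwards [hbound, hQ₁ne, self_mem_nhdsWithin] with ρ hb hq (hρ : 0 < ρ)
    have hratio : ρ * (P.eval ρ / Q.eval ρ) ^ 2 =
        P₁.eval ρ ^ 2 / (ρ ^ (2 * d + 1) * Q₁.eval ρ ^ 2) := by
      rw [hP₁, hQ₁, hd]
      field_simp
      ring
    rw [hratio, div_le_iff₀ (by positivity)] at hb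
    simp only [R, eval_sub, eval_mul, eval_pow, eval_C, eval_X]
    linarith
  exact (le_of_tendsto (R.continuous.tendsto 0 |>.mono_left nhdsWithin_le_nhds) hR).not_gt hR0

theorem exists_contDiffOn_Ici_eq_eval_div_eval {P Q : ℝ[X]} (hQ : ∀ ρ, 0 < ρ → Q.eval ρ ≠ 0)
    {K : ℝ} (hbound : ∀ᶠ ρ in 𝓝[>] 0, ρ * (P.eval ρ / Q.eval ρ) ^ 2 ≤ K) (k : WithTop ℕ∞) :
    ∃ g : ℝ → ℝ, ContDiffOn ℝ k g (Set.Ici 0) ∧ ∀ ρ, 0 < ρ → g ρ = P.eval ρ / Q.eval ρ := by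
  rcases eq_or_ne P 0 with rfl | hP
  · exact ⟨0, contDiffOn_const, by simp⟩
  have hQ0 : Q ≠ 0 := fun h ↦ hQ 1 one_pos (by simp [h])
  obtain ⟨P₁, -, hP₁⟩ := exists_eval_eq_pow_rootMultiplicity_zero_mul hP
  obtain ⟨Q₁, hQ₁0, hQ₁⟩ := exists_eval_eq_pow_rootMultiplicity_zero_mul hQ0
  obtain ⟨d, hd⟩ :=
    Nat.exists_eq_add_of_le (rootMultiplicity_zero_le_of_eventually_mul_sq_div_le hP hQ0 hbound)
  have hQ₁ne : ∀ ρ ∈ Set.Ici (0 : ℝ), Q₁.eval ρ ≠ 0 := by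
    rintro ρ (hρ : 0 ≤ ρ)
    rcases hρ.eq_or_lt with rfl | hρ
    · exact hQ₁0
    · exact right_ne_zero_of_mul (hQ₁ ρ ▸ hQ ρ hρ)
  refine ⟨fun ρ ↦ (X ^ d * P₁).eval ρ / Q₁.eval ρ,
    ((X ^ d * P₁).contDiff_eval k).contDiffOn.div (Q₁.contDiff_eval k).contDiffOn hQ₁ne,
    fun ρ hρ ↦ ?_⟩
  have := hQ₁ne ρ hρ.le
  simp only [hP₁, hQ₁, hd, eval_mul, eval_pow, eval_X]
  field_simp
  ring

end Polynomial

namespace Matrix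

variable {m : Type*} [Fintype m]

theorem IsHermitian.dotProduct_mulVec_comm {A : Matrix m m ℝ} (hA : A.IsHermitian)
    (x y : m → ℝ) : x ⬝ᵥ A *ᵥ y = y ⬝ᵥ A *ᵥ x := by
  have hT : Aᵀ = A := by simpa using hA.eq
  rw [dotProduct_mulVec, ← mulVec_transpose, dotProduct_comm, hT]

theorem PosSemidef.dotProduct_mulVec_sq_le {A : Matrix m m ℝ} (hA : A.PosSemidef) (x y : m → ℝ) :
    (x ⬝ᵥ A *ᵥ y) ^ 2 ≤ (x ⬝ᵥ A *ᵥ x) * (y ⬝ᵥ A *ᵥ y) := by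
  have hquad : ∀ t : ℝ,
      0 ≤ (y ⬝ᵥ A *ᵥ y) * (t * t) + 2 * (x ⬝ᵥ A *ᵥ y) * t + x ⬝ᵥ A *ᵥ x := by
    intro t
    have h := hA.dotProduct_mulVec_nonneg (x + t • y)
    simp only [star_trivial, mulVec_add, mulVec_smul, add_dotProduct, dotProduct_add,
      smul_dotProduct, dotProduct_smul, smul_eq_mul, hA.isHermitian.dotProduct_mulVec_comm y x] at h
    linarith
  have := discrim_le_zero hquad
  rw [discrim] at this
  linarith

variable [DecidableEq m]

theorem mulVec_nonsing_inv_mulVec {R : Type*} [CommRing R] {A : Matrix m m R} (hA : IsUnit A)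
    (x : m → R) : A *ᵥ (A⁻¹ *ᵥ x) = x := by
  rw [mulVec_mulVec, mul_nonsing_inv _ ((isUnit_iff_isUnit_det A).mp hA), one_mulVec]

/-- Test the hypothesis on `z = A⁻¹ x`. -/
theorem dotProduct_inv_mulVec_le_of_sq_le {A : Matrix m m ℝ} (hA : IsUnit A) {x : m → ℝ} {c : ℝ}
    (hc : 0 ≤ c) (h : ∀ z, (x ⬝ᵥ z) ^ 2 ≤ c * (z ⬝ᵥ A *ᵥ z)) : x ⬝ᵥ A⁻¹ *ᵥ x ≤ c := by
  have := h (A⁻¹ *ᵥ x)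
  rw [mulVec_nonsing_inv_mulVec hA, dotProduct_comm (A⁻¹ *ᵥ x)] at this
  nlinarith

theorem PosSemidef.dotProduct_inv_mulVec_antitone {A B : Matrix m m ℝ} (hA : A.PosSemidef)
    (hAu : IsUnit A) (hBu : IsUnit B) (hAB : ∀ z, z ⬝ᵥ A *ᵥ z ≤ z ⬝ᵥ B *ᵥ z) (y : m → ℝ) :
    y ⬝ᵥ B⁻¹ *ᵥ y ≤ y ⬝ᵥ A⁻¹ *ᵥ y := by
  set z := B⁻¹ *ᵥ y
  set z' := A⁻¹ *ᵥ y
  have hz : B *ᵥ z = y := mulVec_nonsing_inv_mulVec hBu y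
  have hz' : A *ᵥ z' = y := mulVec_nonsing_inv_mulVec hAu y
  have hdiff := hA.dotProduct_mulVec_nonneg (z - z')
  simp only [star_trivial, mulVec_sub, dotProduct_sub, sub_dotProduct, hz',
    hA.isHermitian.dotProduct_mulVec_comm z' z] at hdiff
  have hzz := hAB z
  rw [hz] at hzz
  rw [dotProduct_comm y z, dotProduct_comm y z']
  linarith

theorem det_map_eval {R : Type*} [CommRing R] (N : Matrix m m R[X]) (x : R) :
    (N.map (eval x)).det = N.det.eval x :=
  (RingHom.map_det (evalRingHom x) N).symm

theorem inv_map_eval_apply {K : Type*} [Field K] (N : Matrix m m K[X]) (x : K) (i j : m) :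
    (N.map (eval x))⁻¹ i j = (N.adjugate i j).eval x / N.det.eval x := by
  have hadj : (N.map (eval x)).adjugate i j = (N.adjugate i j).eval x :=
    congrFun (congrFun (RingHom.map_adjugate (evalRingHom x) N).symm i) j
  rw [inv_def, smul_apply, det_map_eval, hadj, Ring.inverse_eq_inv', smul_eq_mul, div_eq_inv_mul]

end Matrix

theorem sum_inc_mul {V E : Type*} [Fintype V] [DecidableEq V] {hm tm : E → V} {e : E}
    (he : hm e ≠ tm e) (y : V → ℝ) : ∑ v, inc hm tm e v * y v = y (hm e) - y (tm e) := by
  have hinc : ∀ v, inc hm tm e v = (if hm e = v then 1 else 0) - (if tm e = v then 1 else 0) := by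
    intro v
    unfold inc
    split_ifs <;> simp_all
  simp [hinc, sub_mul, Finset.sum_sub_distrib]

theorem Reach.apply_eq {V E α : Type*} {hm tm : E → V} {S : Set E} {y : V → α}
    (hy : ∀ e ∈ S, y (hm e) = y (tm e)) {a b : V} (h : Reach hm tm S a b) : y a = y b := by
  induction h with
  | rel a b hab =>
    obtain ⟨e, he, rfl, rfl⟩ := hab
    exact hy e he
  | refl => rfl
  | symm _ _ _ ih => exact ih.symm
  | trans _ _ _ _ _ ih₁ ih₂ => exact ih₁.trans ih₂

section Laplacian

variable {n : ℕ} {E : Type*} (hm tm : E → Fin (n + 1))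

def incVec (e : E) : Fin n → ℝ := fun i ↦ inc hm tm e i.castSucc

/-- The last vertex is grounded: `x` is extended by the potential `0` there. -/
theorem incVec_dotProduct {e : E} (he : hm e ≠ tm e) (x : Fin n → ℝ) :
    incVec hm tm e ⬝ᵥ x =
      (Fin.snoc x 0 : Fin (n + 1) → ℝ) (hm e) - (Fin.snoc x 0 : Fin (n + 1) → ℝ) (tm e) := by
  rw [← sum_inc_mul he, Fin.sum_univ_castSucc]
  simp [dotProduct, incVec]

theorem eq_zero_of_forall_incVec_dotProduct_eq_zero
    (hconn : ∀ a b : Fin (n + 1), Reach hm tm Set.univ a b) (hloop : ∀ e, hm e ≠ tm e)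
    {x : Fin n → ℝ} (hx : ∀ e, incVec hm tm e ⬝ᵥ x = 0) : x = 0 := by
  have hpot : ∀ a b, (Fin.snoc x 0 : Fin (n + 1) → ℝ) a = (Fin.snoc x 0 : Fin (n + 1) → ℝ) b :=
    fun a b ↦ (hconn a b).apply_eq fun e _ ↦ by
      rw [← sub_eq_zero, ← incVec_dotProduct hm tm (hloop e), hx]
  funext i
  simpa using hpot i.castSucc (Fin.last n)

variable [Fintype E]

theorem dotProduct_lap_mulVec (w : E → ℝ) (x y : Fin n → ℝ) :
    x ⬝ᵥ lap hm tm w *ᵥ y = ∑ e, (incVec hm tm e ⬝ᵥ x) * (incVec hm tm e ⬝ᵥ y) / w e := by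
  simp only [dotProduct, mulVec, lap, of_apply, incVec, Finset.mul_sum, Finset.sum_mul,
    Finset.sum_div]
  refine (Finset.sum_congr rfl fun i _ ↦ Finset.sum_comm).trans (Finset.sum_comm.trans ?_)
  exact Finset.sum_congr rfl fun e _ ↦ Finset.sum_comm.trans <|
    Finset.sum_congr rfl fun k _ ↦ Finset.sum_congr rfl fun i _ ↦ by ring

theorem lap_isSymm (w : E → ℝ) : (lap hm tm w).IsSymm := by
  ext i k
  simp only [transpose_apply, lap, of_apply, mul_comm]

variable (hconn : ∀ a b : Fin (n + 1), Reach hm tm Set.univ a b) (hloop : ∀ e, hm e ≠ tm e)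
include hconn hloop

theorem lap_posDef {w : E → ℝ} (hw : ∀ e, 0 < w e) : (lap hm tm w).PosDef := by
  refine PosDef.of_dotProduct_mulVec_pos (by simpa using lap_isSymm hm tm w) fun x hx ↦ ?_
  obtain ⟨e, he⟩ : ∃ e, incVec hm tm e ⬝ᵥ x ≠ 0 := by
    by_contra! h
    exact hx (eq_zero_of_forall_incVec_dotProduct_eq_zero hm tm hconn hloop h)
  rw [star_trivial, dotProduct_lap_mulVec]
  exact Finset.sum_pos' (fun e _ ↦ div_nonneg (mul_self_nonneg _) (hw e).le)
    ⟨e, Finset.mem_univ e, div_pos (mul_self_pos.mpr he) (hw e)⟩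

theorem incVec_dotProduct_lap_inv_mulVec_le {w : E → ℝ} (hw : ∀ e, 0 < w e) (e : E) :
    incVec hm tm e ⬝ᵥ (lap hm tm w)⁻¹ *ᵥ incVec hm tm e ≤ w e := by
  refine dotProduct_inv_mulVec_le_of_sq_le (lap_posDef hm tm hconn hloop hw).isUnit (hw e).le
    fun z ↦ ?_
  have hterm := Finset.single_le_sum
    (f := fun e ↦ (incVec hm tm e ⬝ᵥ z) * (incVec hm tm e ⬝ᵥ z) / w e)
    (fun e _ ↦ div_nonneg (mul_self_nonneg _) (hw e).le) (Finset.mem_univ e)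
  rw [← dotProduct_lap_mulVec, div_le_iff₀' (hw e)] at hterm
  nlinarith

theorem dotProduct_lap_inv_mulVec_mono {w w' : E → ℝ} (hw : ∀ e, 0 < w e)
    (hww' : ∀ e, w e ≤ w' e) (y : Fin n → ℝ) :
    y ⬝ᵥ (lap hm tm w)⁻¹ *ᵥ y ≤ y ⬝ᵥ (lap hm tm w')⁻¹ *ᵥ y := by
  have hM' := lap_posDef hm tm hconn hloop fun e ↦ (hw e).trans_le (hww' e)
  refine hM'.posSemidef.dotProduct_inv_mulVec_antitone hM'.isUnit
    (lap_posDef hm tm hconn hloop hw).isUnit (fun z ↦ ?_) y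
  simp only [dotProduct_lap_mulVec]
  exact Finset.sum_le_sum fun e _ ↦ div_le_div_of_nonneg_left (mul_self_nonneg _) (hw e) (hww' e)

end Laplacian

section Green

variable {n : ℕ} {E : Type*} [Fintype E] (hm tm : E → Fin (n + 1))

noncomputable def edgeGreen (w : E → ℝ) (e : E) (j : Fin n) : ℝ :=
  (1 / w e) * ∑ i, inc hm tm e i.castSucc * (lap hm tm w)⁻¹ i j

theorem edgeGreen_eq_dotProduct (w : E → ℝ) (e : E) (j : Fin n) :
    edgeGreen hm tm w e j =
      (1 / w e) * (incVec hm tm e ⬝ᵥ (lap hm tm w)⁻¹ *ᵥ Pi.single j 1) := by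
  simp [edgeGreen, incVec, dotProduct, mulVec_single]

theorem sq_edgeGreen_le (hconn : ∀ a b : Fin (n + 1), Reach hm tm Set.univ a b)
    (hloop : ∀ e, hm e ≠ tm e) {w : E → ℝ} (hw : ∀ e, 0 < w e) (e : E) (j : Fin n) :
    edgeGreen hm tm w e j ^ 2 ≤ (Pi.single j 1 ⬝ᵥ (lap hm tm w)⁻¹ *ᵥ Pi.single j 1) / w e := by
  have hG := (lap_posDef hm tm hconn hloop hw).inv.posSemidef
  set X := incVec hm tm e ⬝ᵥ (lap hm tm w)⁻¹ *ᵥ Pi.single j 1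
  set D := Pi.single j 1 ⬝ᵥ (lap hm tm w)⁻¹ *ᵥ Pi.single j 1
  have hD : 0 ≤ D := by simpa only [star_trivial] using hG.dotProduct_mulVec_nonneg (Pi.single j 1)
  have hX : X ^ 2 ≤ w e * D := (hG.dotProduct_mulVec_sq_le _ _).trans
    (mul_le_mul_of_nonneg_right (incVec_dotProduct_lap_inv_mulVec_le hm tm hconn hloop hw e) hD)
  have hwe := (hw e).ne'
  calc edgeGreen hm tm w e j ^ 2 = (1 / w e) ^ 2 * X ^ 2 := by
        rw [edgeGreen_eq_dotProduct, mul_pow]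
    _ ≤ (1 / w e) ^ 2 * (w e * D) := by gcongr
    _ = D / w e := by field_simp

noncomputable def lapPoly (c : E → ℝ[X]) : Matrix (Fin n) (Fin n) ℝ[X] :=
  Matrix.of fun i k ↦ ∑ e, C (incVec hm tm e i * incVec hm tm e k) * c e

theorem lapPoly_map_eval {c : E → ℝ[X]} {w : E → ℝ} {ρ : ℝ} (hc : ∀ e, (c e).eval ρ = ρ / w e) :
    (lapPoly hm tm c).map (eval ρ) = ρ • lap hm tm w := by
  ext i k
  simp only [map_apply, lapPoly, of_apply, eval_finsetSum, eval_mul, eval_C, hc,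
    Matrix.smul_apply, lap, smul_eq_mul, Finset.mul_sum, incVec]
  exact Finset.sum_congr rfl fun e _ ↦ by ring

/-- When `ρ / w ρ e` is polynomial in `ρ`, so is `ρ • lap hm tm (w ρ)`; then apply Cramer's rule. -/
theorem exists_eval_div_eval_eq_edgeGreen
    (hconn : ∀ a b : Fin (n + 1), Reach hm tm Set.univ a b) (hloop : ∀ e, hm e ≠ tm e)
    {w : ℝ → E → ℝ} (hw : ∀ ρ, 0 < ρ → ∀ e, 0 < w ρ e) {c : E → ℝ[X]}
    (hc : ∀ ρ, 0 < ρ → ∀ e, (c e).eval ρ = ρ / w ρ e) (e : E) (j : Fin n) :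
    ∃ P Q : ℝ[X], (∀ ρ, 0 < ρ → Q.eval ρ ≠ 0) ∧
      ∀ ρ, 0 < ρ → edgeGreen hm tm (w ρ) e j = P.eval ρ / Q.eval ρ := by
  set N := lapPoly hm tm c
  have hN : ∀ ρ, 0 < ρ → N.map (eval ρ) = ρ • lap hm tm (w ρ) :=
    fun ρ hρ ↦ lapPoly_map_eval hm tm (hc ρ hρ)
  have hM : ∀ ρ, 0 < ρ → (lap hm tm (w ρ)).PosDef :=
    fun ρ hρ ↦ lap_posDef hm tm hconn hloop (hw ρ hρ)
  refine ⟨c e * ∑ i, C (incVec hm tm e i) * N.adjugate i j, N.det, fun ρ hρ ↦ ?_, fun ρ hρ ↦ ?_⟩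
  · rw [← det_map_eval, hN ρ hρ]
    exact ((hM ρ hρ).smul hρ).det_pos.ne'
  · have hinv : ∀ i, (lap hm tm (w ρ))⁻¹ i j = ρ * ((N.adjugate i j).eval ρ / N.det.eval ρ) := by
      intro i
      have : Invertible ρ := invertibleOfNonzero hρ.ne'
      rw [← inv_map_eval_apply, hN ρ hρ, inv_smul _ _ (hM ρ hρ).det_pos.ne'.isUnit, invOf_eq_inv,
        Matrix.smul_apply, smul_eq_mul, mul_inv_cancel_left₀ hρ.ne']
    simp only [edgeGreen, hinv, eval_mul, hc ρ hρ e, eval_finsetSum, eval_C, Finset.mul_sum,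
      Finset.sum_div, incVec]
    exact Finset.sum_congr rfl fun i _ ↦ by ring

end Green

section ScaledWeight

variable {E : Type*} [DecidableEq E] (S : Finset E) (ξ s : E → ℝ)

def scaledWeight (ρ : ℝ) (e : E) : ℝ := if e ∈ S then ρ * ξ e else s e

/-- `ρ / scaledWeight S ξ s ρ e` as a polynomial in `ρ`. -/
noncomputable def scaledConductance (e : E) : ℝ[X] := if e ∈ S then C (ξ e)⁻¹ else C (s e)⁻¹ * X

variable {S ξ s}

theorem eval_scaledConductance {ρ : ℝ} (hρ : ρ ≠ 0) (e : E) :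
    (scaledConductance S ξ s e).eval ρ = ρ / scaledWeight S ξ s ρ e := by
  unfold scaledConductance scaledWeight
  split_ifs
  · rw [eval_C, div_mul_cancel_left₀ hρ]
  · rw [eval_mul, eval_C, eval_X, div_eq_inv_mul]

theorem scaledWeight_pos (hξ : ∀ e, 0 < ξ e) (hs : ∀ e, 0 < s e) {ρ : ℝ} (hρ : 0 < ρ) (e : E) :
    0 < scaledWeight S ξ s ρ e := by
  unfold scaledWeight
  split_ifs
  exacts [mul_pos hρ (hξ e), hs e]

theorem scaledWeight_le_scaledWeight_one (hξ : ∀ e, 0 < ξ e) {ρ : ℝ} (hρ : ρ ≤ 1) (e : E) :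
    scaledWeight S ξ s ρ e ≤ scaledWeight S ξ s 1 e := by
  unfold scaledWeight
  split_ifs
  exacts [mul_le_mul_of_nonneg_right hρ (hξ e).le, le_rfl]

theorem div_scaledWeight_le_one_div (hs : ∀ e, 0 < s e) {ρ : ℝ} (hρ : 0 < ρ) (hρ1 : ρ ≤ 1)
    (e : E) : ρ / scaledWeight S ξ s ρ e ≤ 1 / scaledWeight S ξ s 1 e := by
  unfold scaledWeight
  split_ifs
  · rw [div_mul_cancel_left₀ hρ.ne', one_mul, one_div]
  · exact div_le_div_of_nonneg_right hρ1 (hs e).le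

end ScaledWeight

theorem eventually_mul_sq_edgeGreen_scaledWeight_le {n : ℕ} {E : Type*} [Fintype E]
    [DecidableEq E] (hm tm : E → Fin (n + 1))
    (hconn : ∀ a b : Fin (n + 1), Reach hm tm Set.univ a b) (hloop : ∀ e, hm e ≠ tm e)
    {S : Finset E} {ξ s : E → ℝ} (hξ : ∀ e, 0 < ξ e) (hs : ∀ e, 0 < s e) (e : E) (j : Fin n) :
    ∀ᶠ ρ in 𝓝[>] 0, ρ * edgeGreen hm tm (scaledWeight S ξ s ρ) e j ^ 2 ≤
      1 / scaledWeight S ξ s 1 e *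
        (Pi.single j 1 ⬝ᵥ (lap hm tm (scaledWeight S ξ s 1))⁻¹ *ᵥ Pi.single j 1) := by
  filter_upwards [Ioc_mem_nhdsGT one_pos] with ρ ⟨hρ, hρ1⟩
  have hw := scaledWeight_pos (S := S) hξ hs hρ
  set D := Pi.single j 1 ⬝ᵥ (lap hm tm (scaledWeight S ξ s ρ))⁻¹ *ᵥ Pi.single j 1
  have hD : 0 ≤ D := by
    simpa only [star_trivial] using
      (lap_posDef hm tm hconn hloop hw).inv.posSemidef.dotProduct_mulVec_nonneg
      (Pi.single j 1)
  calc ρ * edgeGreen hm tm (scaledWeight S ξ s ρ) e j ^ 2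
      ≤ ρ * (D / scaledWeight S ξ s ρ e) :=
        mul_le_mul_of_nonneg_left (sq_edgeGreen_le hm tm hconn hloop hw e j) hρ.le
    _ = ρ / scaledWeight S ξ s ρ e * D := by ring
    _ ≤ _ := mul_le_mul (div_scaledWeight_le_one_div hs hρ hρ1 e)
          (dotProduct_lap_inv_mulVec_mono hm tm hconn hloop hw
            (scaledWeight_le_scaledWeight_one hξ hρ1) _)
          hD (one_div_pos.mpr (scaledWeight_pos hξ hs one_pos e)).le

theorem lap_green_smooth_extension_general {n : ℕ} {E : Type*}
    [Fintype E] [DecidableEq E]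
    (hm tm : E → Fin (n + 1))
    (hconn : ∀ a b : Fin (n + 1), Reach hm tm Set.univ a b)
    (hloop : ∀ e, hm e ≠ tm e)
    (S : Finset E)
    (ξ s : E → ℝ) (hξ : ∀ e, 0 < ξ e) (hs : ∀ e, 0 < s e)
    (e : E) (j : Fin n) :
    ∃ g : ℝ → ℝ, ContDiffOn ℝ (⊤ : ℕ∞) g (Set.Ici 0) ∧
      ∀ ρ : ℝ, 0 < ρ →
        g ρ = (1 / (if e ∈ S then ρ * ξ e else s e)) *
          ∑ i : Fin n, inc hm tm e i.castSucc *
            (lap hm tm fun e' => if e' ∈ S then ρ * ξ e' else s e')⁻¹ i j := by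
  obtain ⟨P, Q, hQ, hPQ⟩ := exists_eval_div_eval_eq_edgeGreen hm tm hconn hloop
    (fun ρ hρ ↦ scaledWeight_pos (S := S) hξ hs hρ) (fun ρ hρ ↦ eval_scaledConductance hρ.ne') e j
  have hbound := (eventually_mul_sq_edgeGreen_scaledWeight_le hm tm hconn hloop hξ hs e j).mp
    (eventually_mem_nhdsWithin.mono fun ρ (hρ : 0 < ρ) h ↦ by rwa [hPQ ρ hρ] at h)
  obtain ⟨g, hg, hgPQ⟩ := Polynomial.exists_contDiffOn_Ici_eq_eval_div_eval hQ hbound _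
  exact ⟨g, hg, fun ρ hρ ↦ (hgPQ ρ hρ).trans (hPQ ρ hρ).symm⟩

theorem lap_green_smooth_extension {n : ℕ} (hn : 1 ≤ n) {E : Type*}
    [Fintype E] [DecidableEq E]
    (hm tm : E → Fin (n + 1))
    (hconn : ∀ a b : Fin (n + 1), Reach hm tm Set.univ a b)
    (hloop : ∀ e, hm e ≠ tm e)
    (S : Finset E) (hS : S.Nonempty)
    (ξ s : E → ℝ) (hξ : ∀ e, 0 < ξ e) (hs : ∀ e, 0 < s e)
    (e : E) (j : Fin n) :
    ∃ g : ℝ → ℝ, ContDiffOn ℝ (⊤ : ℕ∞) g (Set.Ici 0) ∧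
      ∀ ρ : ℝ, 0 < ρ →
        g ρ = (1 / (if e ∈ S then ρ * ξ e else s e)) *
          ∑ i : Fin n, inc hm tm e i.castSucc *
            (lap hm tm fun e' => if e' ∈ S then ρ * ξ e' else s e')⁻¹ i j :=
  lap_green_smooth_extension_general hm tm hconn hloop S ξ s hξ hs e j
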